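/- arXiv:1812.02140 — 5 statements merged into one kernel-verified Lean document; each statement's English description precedes it below -/
import Mathlib

section
/- Suppose a monotone, sup-norm-nonexpansive scheme S^M satisfies the Crandall–Lions error estimate ‖w^n − v^n‖_∞ ≤ C_{CL} √Δx for the exact solution values v^n, where w is the iteration of S^M from the exact initial data. Then the adaptive filtered scheme u^{n+1}_j = S^M(u^n)_j + φ_j^n ε^n Δt F(·) with |F| ≤ 1, φ ∈ [0,1], ε^n ≤ CΔx, Δt = λΔx (λ fixed), and u^0 = v^0 satisfies ‖u^n − v^n‖_∞ ≤ (C_{CL} + CT)√Δx for all n with nΔt ≤ T. -/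
/-- Crandall–Lions type estimate for the adaptive filtered scheme: if the
monotone scheme satisfies `‖wⁿ − vⁿ‖_∞ ≤ C_CL √Δx`, then the adaptive filtered
scheme satisfies `‖uⁿ − vⁿ‖_∞ ≤ (C_CL + C T) √Δx`. -/
theorem filtered_scheme_crandall_lions
    (S : (ℤ → ℝ) → (ℤ → ℝ))
    (hnonexp : ∀ (u w : ℤ → ℝ) (K : ℝ),
      (∀ j, |u j - w j| ≤ K) → ∀ j, |S u j - S w j| ≤ K)
    (F φ : ℕ → ℤ → ℝ) (ε : ℕ → ℝ) (C CCL Δt Δx lam T : ℝ)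
    (hF : ∀ n j, |F n j| ≤ 1) (hφ : ∀ n j, φ n j ∈ Set.Icc (0:ℝ) 1)
    (hε : ∀ n, 0 < ε n ∧ ε n ≤ C * Δx)
    (hΔx : 0 < Δx) (hΔx1 : Δx ≤ 1) (hlam : 0 < lam) (hΔt : Δt = lam * Δx)
    (hT : 0 < T)
    (v u w : ℕ → ℤ → ℝ)
    (hu0 : u 0 = v 0) (hw0 : w 0 = v 0)
    (hu : ∀ n j, u (n + 1) j = S (u n) j + φ n j * ε n * Δt * F n j)
    (hw : ∀ n, w (n + 1) = S (w n))
    (hCL : ∀ n : ℕ, (n : ℝ) * Δt ≤ T →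
      ∀ j, |w n j - v n j| ≤ CCL * Real.sqrt Δx) :
    ∀ n : ℕ, (n : ℝ) * Δt ≤ T →
      ∀ j, |u n j - v n j| ≤ (CCL + C * T) * Real.sqrt Δx := by
  have hΔtpos : 0 < Δt := by rw [hΔt]; positivity
  have hC : 0 < C := by
    have h := (hε 0).1.trans_le (hε 0).2
    nlinarith
  -- u vs w
  have key : ∀ n : ℕ, ∀ j, |u n j - w n j| ≤ (n : ℝ) * (C * Δx * Δt) := by
    intro n
    induction n with
    | zero => intro j; simp [hu0, hw0]
    | succ n ih =>
      intro j
      have hS := hnonexp (u n) (w n) _ ih j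
      have hpert : |φ n j * ε n * Δt * F n j| ≤ C * Δx * Δt := by
        have hφ1 := (hφ n j).1
        have hφ2 := (hφ n j).2
        have hε1 := (hε n).1
        have hε2 := (hε n).2
        have hFj := hF n j
        have hFabs : |F n j| ≤ 1 := hFj
        rw [abs_mul, abs_mul, abs_mul]
        have h1 : |φ n j| ≤ 1 := by rw [abs_of_nonneg hφ1]; exact hφ2
        have h2 : |ε n| ≤ C * Δx := by rw [abs_of_pos hε1]; exact hε2
        have h3 : |Δt| = Δt := abs_of_pos hΔtpos
        have hCx : 0 ≤ C * Δx := by positivity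
        have s1 : |φ n j| * |ε n| ≤ C * Δx := by
          nlinarith [abs_nonneg (φ n j), abs_nonneg (ε n)]
        have s2 : |φ n j| * |ε n| * |Δt| ≤ C * Δx * Δt := by
          rw [h3]; nlinarith [abs_nonneg (φ n j), abs_nonneg (ε n)]
        nlinarith [abs_nonneg (F n j), mul_nonneg (mul_nonneg (abs_nonneg (φ n j)) (abs_nonneg (ε n))) (abs_nonneg Δt)]
      calc |u (n+1) j - w (n+1) j|
          = |(S (u n) j - S (w n) j) + φ n j * ε n * Δt * F n j| := by
            rw [hu n j, hw n]; ring_nf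
        _ ≤ |S (u n) j - S (w n) j| + |φ n j * ε n * Δt * F n j| := abs_add_le _ _
        _ ≤ (n : ℝ) * (C * Δx * Δt) + C * Δx * Δt := add_le_add hS hpert
        _ = ((n : ℝ) + 1) * (C * Δx * Δt) := by ring
        _ = ((n + 1 : ℕ) : ℝ) * (C * Δx * Δt) := by push_cast; ring
  intro n hn j
  have hsx : Δx ≤ Real.sqrt Δx := by
    have hs1 : Real.sqrt Δx ≤ 1 := Real.sqrt_le_one.mpr hΔx1
    nlinarith [Real.sq_sqrt hΔx.le, Real.sqrt_nonneg Δx]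
  have h1 : |u n j - v n j| ≤ |u n j - w n j| + |w n j - v n j| := by
    have := abs_sub_le (u n j) (w n j) (v n j); linarith
  have h2 := key n j
  have h3 := hCL n hn j
  have h4 : (n : ℝ) * (C * Δx * Δt) ≤ C * T * Real.sqrt Δx := by
    have : (n : ℝ) * (C * Δx * Δt) = C * Δx * ((n:ℝ) * Δt) := by ring
    rw [this]
    have hnn : (0:ℝ) ≤ (n:ℝ) * Δt := by positivity
    have hCΔx : 0 ≤ C * Δx := by positivity
    calc C * Δx * ((n:ℝ) * Δt) ≤ C * Δx * T :=
          mul_le_mul_of_nonneg_left hn hCΔx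
      _ ≤ C * Real.sqrt Δx * T := by
          have := mul_le_mul_of_nonneg_left hsx hC.le
          nlinarith
      _ = C * T * Real.sqrt Δx := by ring
  calc |u n j - v n j| ≤ (n : ℝ) * (C * Δx * Δt) + CCL * Real.sqrt Δx := by linarith
    _ ≤ C * T * Real.sqrt Δx + CCL * Real.sqrt Δx := by linarith
    _ = (CCL + C * T) * Real.sqrt Δx := by ring
end

section
/- First-order convergence for regular solutions: suppose the monotone scheme S^M is nonexpansive in sup norm and has consistency error ‖(v^{n+1} − S^M(v^n))/Δt‖_∞ ≤ C_M(Δt + Δx) for the exact solution values v^n of a C² solution. Then the adaptive filtered scheme u^{n+1}_j = S^M(u^n)_j + φ_j^n ε^n Δt F(·), with |F| ≤ 1, φ ∈ [0,1], ε^n ≤ CΔx, u^0 = v^0 and Δt = λΔx, satisfies ‖u^n − v^n‖_∞ ≤ T(C_M(λ+1) + C)Δx for all n with nΔt ≤ T. -/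
/-- First-order convergence of the adaptive filtered scheme for `C²` solutions:
if the monotone scheme is sup-norm nonexpansive with consistency error bounded
by `C_M(Δt + Δx)`, then `‖uⁿ − vⁿ‖_∞ ≤ T(C_M(λ+1) + C)Δx`. -/
theorem filtered_scheme_first_order_convergence
    (S : (ℤ → ℝ) → (ℤ → ℝ))
    (hnonexp : ∀ (u w : ℤ → ℝ) (K : ℝ),
      (∀ j, |u j - w j| ≤ K) → ∀ j, |S u j - S w j| ≤ K)
    (F φ : ℕ → ℤ → ℝ) (ε : ℕ → ℝ) (C CM Δt Δx lam T : ℝ)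
    (hF : ∀ n j, |F n j| ≤ 1) (hφ : ∀ n j, φ n j ∈ Set.Icc (0:ℝ) 1)
    (hε : ∀ n, 0 < ε n ∧ ε n ≤ C * Δx)
    (hΔx : 0 < Δx) (hlam : 0 < lam) (hΔt : Δt = lam * Δx) (hT : 0 < T)
    (v u : ℕ → ℤ → ℝ) (hu0 : u 0 = v 0)
    (hu : ∀ n j, u (n + 1) j = S (u n) j + φ n j * ε n * Δt * F n j)
    (hcons : ∀ n : ℕ, (n : ℝ) * Δt ≤ T →
      ∀ j, |v (n + 1) j - S (v n) j| ≤ Δt * (CM * (Δt + Δx))) :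
    ∀ n : ℕ, (n : ℝ) * Δt ≤ T →
      ∀ j, |u n j - v n j| ≤ T * (CM * (lam + 1) + C) * Δx := by
  have hΔt0 : 0 < Δt := by rw [hΔt]; positivity
  -- C * Δx > 0
  have hC : 0 < C * Δx := lt_of_lt_of_le (hε 0).1 (hε 0).2
  -- CM * (Δt + Δx) ≥ 0 from consistency at n = 0
  have hCM : 0 ≤ CM * (Δt + Δx) := by
    have h0 := hcons 0 (by simpa using hT.le) 0
    nlinarith [abs_nonneg (v 1 0 - S (v 0) 0)]
  have hKey : ∀ n : ℕ, (n : ℝ) * Δt ≤ T →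
      ∀ j, |u n j - v n j| ≤ (n : ℝ) * Δt * (CM * (lam + 1) + C) * Δx := by
    intro n
    induction n with
    | zero => intro _ j; simp [hu0]
    | succ n ih =>
      intro hn j
      have hstep : (n : ℝ) * Δt ≤ T := by
        have : (n : ℝ) ≤ (n : ℝ) + 1 := by linarith
        calc (n : ℝ) * Δt ≤ ((n : ℝ) + 1) * Δt := by nlinarith
          _ ≤ T := by push_cast at hn; linarith
      have ihn := ih hstep
      have hS : |S (u n) j - S (v n) j| ≤ (n : ℝ) * Δt * (CM * (lam + 1) + C) * Δx :=
        hnonexp _ _ _ ihn j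
      have hcn := hcons n hstep j
      have hpert : |φ n j * ε n * Δt * F n j| ≤ C * Δx * Δt := by
        obtain ⟨hφ0, hφ1⟩ := Set.mem_Icc.mp (hφ n j)
        obtain ⟨hε0, hε1⟩ := hε n
        have h1 : |φ n j * ε n * Δt * F n j| = φ n j * ε n * Δt * |F n j| := by
          rw [abs_mul, abs_of_nonneg (by positivity : (0:ℝ) ≤ φ n j * ε n * Δt)]
        rw [h1]
        have hFn := hF n j
        have habs : (0:ℝ) ≤ |F n j| := abs_nonneg _
        calc φ n j * ε n * Δt * |F n j| ≤ φ n j * ε n * Δt * 1 :=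
              mul_le_mul_of_nonneg_left hFn (by positivity)
          _ = φ n j * (ε n * Δt) := by ring
          _ ≤ 1 * (ε n * Δt) :=
              mul_le_mul_of_nonneg_right hφ1 (by positivity)
          _ = ε n * Δt := by ring
          _ ≤ C * Δx * Δt := mul_le_mul_of_nonneg_right hε1 hΔt0.le
      have hsplit : u (n + 1) j - v (n + 1) j =
          (S (u n) j - S (v n) j) + (φ n j * ε n * Δt * F n j) + (S (v n) j - v (n + 1) j) := by
        rw [hu n j]; ring
      have hcn' : |S (v n) j - v (n + 1) j| ≤ Δt * (CM * (Δt + Δx)) := by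
        rw [abs_sub_comm]; exact hcn
      have := abs_add_le (S (u n) j - S (v n) j + φ n j * ε n * Δt * F n j)
        (S (v n) j - v (n + 1) j)
      have h2 := abs_add_le (S (u n) j - S (v n) j) (φ n j * ε n * Δt * F n j)
      have hrw : Δt * (CM * (Δt + Δx)) = Δt * (CM * (lam + 1)) * Δx := by
        rw [hΔt]; ring
      rw [hsplit]
      push_cast
      calc |S (u n) j - S (v n) j + φ n j * ε n * Δt * F n j + (S (v n) j - v (n + 1) j)|
          ≤ |S (u n) j - S (v n) j| + |φ n j * ε n * Δt * F n j|
            + |S (v n) j - v (n + 1) j| := by linarith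
        _ ≤ (n : ℝ) * Δt * (CM * (lam + 1) + C) * Δx + C * Δx * Δt
            + Δt * (CM * (lam + 1)) * Δx := by rw [← hrw]; linarith
        _ = ((n : ℝ) + 1) * Δt * (CM * (lam + 1) + C) * Δx := by ring
  intro n hn j
  have h := hKey n hn j
  have hK : 0 ≤ (CM * (lam + 1) + C) * Δx := by
    have : CM * (lam + 1) * Δx = CM * (Δt + Δx) := by rw [hΔt]; ring
    nlinarith
  calc |u n j - v n j| ≤ (n : ℝ) * Δt * (CM * (lam + 1) + C) * Δx := h
    _ ≤ T * (CM * (lam + 1) + C) * Δx := by nlinarith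
end

section
/- Discrete Lipschitz propagation: if a scheme has the form u^{n+1}_j = S^M(u^n)_j + φ_j^n ε^n Δt F_j^n with S^M nonexpansive in sup norm (applied to shifted sequences), |F_j^n| ≤ 1, φ_j^n ∈ [0,1], and ε^n ≤ CΔx, and if the initial data satisfies |u^0_{j+1} − u^0_j| ≤ L_0 Δx for all j, then |u^n_{j+1} − u^n_j| ≤ (L_0 + 2CT)Δx for all j and all n with nΔt ≤ T. -/
/-- Discrete Lipschitz propagation for the adaptive filtered scheme: if `S^M`
commutes with the shift and is sup-norm nonexpansive, `|F| ≤ 1`, `φ ∈ [0,1]`,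
`εⁿ ≤ CΔx`, and `|u⁰_{j+1} − u⁰_j| ≤ L₀Δx`, then
`|uⁿ_{j+1} − uⁿ_j| ≤ (L₀ + 2CT)Δx` for `nΔt ≤ T`. -/
theorem filtered_scheme_discrete_lipschitz
    (S : (ℤ → ℝ) → (ℤ → ℝ))
    (hshift : ∀ (u : ℤ → ℝ) (j : ℤ), S (fun i => u (i + 1)) j = S u (j + 1))
    (hnonexp : ∀ (u w : ℤ → ℝ) (K : ℝ),
      (∀ j, |u j - w j| ≤ K) → ∀ j, |S u j - S w j| ≤ K)
    (F φ : ℕ → ℤ → ℝ) (ε : ℕ → ℝ) (C Δt Δx T L₀ : ℝ)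
    (hF : ∀ n j, |F n j| ≤ 1) (hφ : ∀ n j, φ n j ∈ Set.Icc (0:ℝ) 1)
    (hε : ∀ n, 0 ≤ ε n ∧ ε n ≤ C * Δx)
    (hΔt : 0 < Δt) (hΔx : 0 < Δx) (hT : 0 < T) (hL₀ : 0 ≤ L₀)
    (u : ℕ → ℤ → ℝ)
    (hu : ∀ n j, u (n + 1) j = S (u n) j + φ n j * ε n * Δt * F n j)
    (h0 : ∀ j, |u 0 (j + 1) - u 0 j| ≤ L₀ * Δx) :
    ∀ n : ℕ, (n : ℝ) * Δt ≤ T →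
      ∀ j, |u n (j + 1) - u n j| ≤ (L₀ + 2 * C * T) * Δx := by
  have hC : 0 ≤ C := by
    have h := hε 0
    nlinarith [h.1, h.2, hΔx]
  -- perturbation bound at each step
  have hpert : ∀ n j, |φ n j * ε n * Δt * F n j| ≤ C * Δx * Δt := by
    intro n j
    have hφ1 := hφ n j
    have hε1 := hε n
    have hF1 := hF n j
    have hnn : (0:ℝ) ≤ φ n j * ε n * Δt :=
      mul_nonneg (mul_nonneg hφ1.1 hε1.1) hΔt.le
    have habs : |φ n j * ε n * Δt * F n j|
        = φ n j * ε n * Δt * |F n j| := by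
      rw [abs_mul, abs_of_nonneg hnn]
    rw [habs]
    have h1 : φ n j * ε n * Δt * |F n j| ≤ φ n j * ε n * Δt * 1 :=
      mul_le_mul_of_nonneg_left hF1
        (mul_nonneg (mul_nonneg hφ1.1 hε1.1) hΔt.le)
    have h2 : φ n j * ε n ≤ 1 * (C * Δx) :=
      mul_le_mul hφ1.2 hε1.2 hε1.1 zero_le_one
    nlinarith
  -- main induction: bound with n*Δt
  have key : ∀ n : ℕ, ∀ j,
      |u n (j + 1) - u n j| ≤ L₀ * Δx + 2 * (C * Δx * Δt) * n := by
    intro n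
    induction n with
    | zero => intro j; simpa using h0 j
    | succ n ih =>
      intro j
      have hSdiff : ∀ i, |S (u n) (i + 1) - S (u n) i|
          ≤ L₀ * Δx + 2 * (C * Δx * Δt) * n := by
        intro i
        have := hnonexp (fun k => u n (k + 1)) (u n)
          (L₀ * Δx + 2 * (C * Δx * Δt) * n) (fun k => ih k) i
        rwa [hshift (u n) i] at this
      have e1 := hu n (j + 1)
      have e2 := hu n j
      have p1 := hpert n (j + 1)
      have p2 := hpert n j
      have hS := hSdiff j
      have : u (n + 1) (j + 1) - u (n + 1) j
          = (S (u n) (j + 1) - S (u n) j)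
            + φ n (j + 1) * ε n * Δt * F n (j + 1)
            - φ n j * ε n * Δt * F n j := by
        rw [e1, e2]; ring
      rw [this]
      push_cast
      calc |S (u n) (j + 1) - S (u n) j
            + φ n (j + 1) * ε n * Δt * F n (j + 1)
            - φ n j * ε n * Δt * F n j|
          ≤ |S (u n) (j + 1) - S (u n) j|
            + |φ n (j + 1) * ε n * Δt * F n (j + 1)|
            + |φ n j * ε n * Δt * F n j| := by
            exact (abs_sub _ _).trans (by
              gcongr
              exact abs_add_le _ _)
        _ ≤ L₀ * Δx + 2 * (C * Δx * Δt) * ↑n + (C * Δx * Δt) + (C * Δx * Δt) := by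
            gcongr
        _ = L₀ * Δx + 2 * (C * Δx * Δt) * (↑n + 1) := by ring
  intro n hn j
  have h1 := key n j
  have h2 : 2 * (C * Δx * Δt) * n ≤ 2 * C * T * Δx := by
    have : (n : ℝ) * Δt ≤ T := hn
    nlinarith [mul_nonneg hC hΔx.le, Nat.cast_nonneg (α := ℝ) n]
  calc |u n (j + 1) - u n j| ≤ L₀ * Δx + 2 * (C * Δx * Δt) * n := h1
    _ ≤ L₀ * Δx + 2 * C * T * Δx := by linarith
    _ = (L₀ + 2 * C * T) * Δx := by ring
end

section
/- ε-monotonicity of the adaptive filtered scheme: if S^M is monotone (u ≤ v ⇒ S^M(u) ≤ S^M(v)), |F| ≤ 1, φ_j ∈ [0,1], and ε ≤ CΔx, then the filtered operator S^{AF}(u)_j = S^M(u)_j + φ_j ε Δt F((S^A(u)_j − S^M(u)_j)/(εΔt)) satisfies: u ≤ v implies S^{AF}(u)_j ≤ S^{AF}(v)_j + 2εΔt for all j. -/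
/-- `ε`-monotonicity of the adaptive filtered scheme: the filtered perturbation
of a monotone scheme violates monotonicity by at most `2εΔt`. -/
theorem filtered_scheme_eps_monotone
    (SM SA : (ℤ → ℝ) → (ℤ → ℝ))
    (hmono : ∀ u v : ℤ → ℝ, (∀ j, u j ≤ v j) → ∀ j, SM u j ≤ SM v j)
    (F : ℝ → ℝ) (hF : ∀ x, |F x| ≤ 1)
    (φ : ℤ → ℝ) (hφ : ∀ j, φ j ∈ Set.Icc (0:ℝ) 1)
    (ε Δt C Δx : ℝ) (hε : 0 < ε) (hΔt : 0 < Δt) (hΔx : 0 < Δx)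
    (hεC : ε ≤ C * Δx)
    (u v : ℤ → ℝ) (huv : ∀ j, u j ≤ v j) :
    ∀ j, SM u j + φ j * ε * Δt * F ((SA u j - SM u j) / (ε * Δt))
      ≤ SM v j + φ j * ε * Δt * F ((SA v j - SM v j) / (ε * Δt))
        + 2 * ε * Δt := by
  intro j
  have hφj := hφ j
  have h1 : |φ j * ε * Δt * F ((SA u j - SM u j) / (ε * Δt))| ≤ ε * Δt := by
    rw [abs_mul]
    calc |φ j * ε * Δt| * |F ((SA u j - SM u j) / (ε * Δt))|
        ≤ |φ j * ε * Δt| * 1 := by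
          exact mul_le_mul_of_nonneg_left (hF _) (abs_nonneg _)
      _ = |φ j| * |ε| * |Δt| := by rw [mul_one, abs_mul, abs_mul]
      _ ≤ 1 * ε * Δt := by
          have : |φ j| ≤ 1 := abs_le.mpr ⟨by linarith [hφj.1], hφj.2⟩
          rw [abs_of_pos hε, abs_of_pos hΔt]
          exact mul_le_mul_of_nonneg_right (mul_le_mul_of_nonneg_right this hε.le) hΔt.le
      _ = ε * Δt := by ring
  have h2 : |φ j * ε * Δt * F ((SA v j - SM v j) / (ε * Δt))| ≤ ε * Δt := by
    rw [abs_mul]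
    calc |φ j * ε * Δt| * |F ((SA v j - SM v j) / (ε * Δt))|
        ≤ |φ j * ε * Δt| * 1 := by
          exact mul_le_mul_of_nonneg_left (hF _) (abs_nonneg _)
      _ = |φ j| * |ε| * |Δt| := by rw [mul_one, abs_mul, abs_mul]
      _ ≤ 1 * ε * Δt := by
          have : |φ j| ≤ 1 := abs_le.mpr ⟨by linarith [hφj.1], hφj.2⟩
          rw [abs_of_pos hε, abs_of_pos hΔt]
          exact mul_le_mul_of_nonneg_right (mul_le_mul_of_nonneg_right this hε.le) hΔt.le
      _ = ε * Δt := by ring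
  have hm := hmono u v huv j
  have a1 := abs_le.mp h1
  have a2 := abs_le.mp h2
  linarith [a1.2, a2.1]
end

section
/- For a smooth function f and grid values f_j = f(x_j) with x_j = jΔx, the smoothness indicators β₀⁺ = ((f_{j+1} − 2f_j + f_{j−1})/Δx)² and β₁⁺ = ((f_{j+2} − 2f_{j+1} + f_j)/Δx)² satisfy, as Δx → 0: β_k⁺ = Δx² f''(x_j)² + O(Δx³) for k = 0, 1; consequently β₀⁺ − β₁⁺ = O(Δx³). -/
/-!
By Taylor's theorem, `f (x + h) = f x + h f'(x) + h² f''(x) / 2 + R(h)` with `R(h) = O(h³)`.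
Both second differences are combinations of `R(h)`, `R(-h)`, `R(2h)` (the centered one is
`R(h) + R(-h)`, the forward one `R(2h) - 2 R(h)`), hence equal `h² f''(x) + O(h³)`. Dividing by
`h` gives `h f''(x) + O(h²)`, and `(D/h)² - (h f''(x))² = (D/h - h f''(x)) (D/h + h f''(x))`
is a product of an `O(h²)` and an `O(h)` term.
-/

open Asymptotics Filter Topology Finset Nat

theorem ContDiffAt.isBigO_sub_taylor {E : Type*} [NormedAddCommGroup E] [NormedSpace ℝ E]
    {f : ℝ → E} {x : ℝ} {n : ℕ} (hf : ContDiffAt ℝ (n + 1) f x) :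
    (fun h ↦ f (x + h) - ∑ k ∈ range (n + 1), ((k ! : ℝ)⁻¹ * h ^ k) • iteratedDeriv k f x)
      =O[𝓝 0] fun h ↦ h ^ (n + 1) := by
  obtain ⟨u, hu, hfu⟩ := hf.contDiffOn le_rfl (by simp)
  obtain ⟨ε, hε, hball⟩ := Metric.mem_nhds_iff.1 hu
  have hx : x ∈ Metric.ball x ε := Metric.mem_ball_self hε
  have hlittle := taylor_isLittleO (convex_ball x ε) hx (hfu.mono hball)
  rw [Metric.isOpen_ball.nhdsWithin_eq hx] at hlittle
  have htaylor : ∀ y, taylorWithinEval f (n + 1) (Metric.ball x ε) x y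
      = ∑ k ∈ range (n + 1), ((k ! : ℝ)⁻¹ * (y - x) ^ k) • iteratedDeriv k f x
        + (((n + 1) ! : ℝ)⁻¹ * (y - x) ^ (n + 1)) • iteratedDeriv (n + 1) f x := by
    intro y
    simp only [taylor_within_apply, sum_range_succ _ (n + 1),
      iteratedDerivWithin_of_isOpen Metric.isOpen_ball hx]
  have hlast : (fun y ↦ (((n + 1) ! : ℝ)⁻¹ * (y - x) ^ (n + 1)) • iteratedDeriv (n + 1) f x)
      =O[𝓝 x] fun y ↦ (y - x) ^ (n + 1) := by
    refine .of_bound (‖((n + 1) ! : ℝ)⁻¹‖ * ‖iteratedDeriv (n + 1) f x‖)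
      (.of_forall fun y ↦ ?_)
    rw [norm_smul, norm_mul]
    exact le_of_eq (by ring)
  have hshift : Tendsto (fun h ↦ x + h) (𝓝 0) (𝓝 x) := by
    simpa using (continuous_const_add x).tendsto 0
  refine ((hlittle.isBigO.add hlast).comp_tendsto hshift).congr (fun h ↦ ?_) (fun h ↦ ?_)
  · simp only [Function.comp_apply, htaylor, add_sub_cancel_left]
    abel
  · simp

theorem ContDiffAt.isBigO_sub_taylor_two {f : ℝ → ℝ} {x : ℝ} (hf : ContDiffAt ℝ 3 f x) :
    (fun h ↦ f (x + h) - (f x + h * deriv f x + h ^ 2 / 2 * deriv (deriv f) x))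
      =O[𝓝 0] fun h ↦ h ^ 3 := by
  refine (hf.isBigO_sub_taylor (n := 2)).congr_left fun h ↦ ?_
  simp only [sum_range_succ, sum_range_zero, iteratedDeriv_zero, iteratedDeriv_succ,
    Nat.factorial, smul_eq_mul]
  push_cast
  ring

theorem Asymptotics.IsBigO.comp_const_mul_of_pow {E : Type*} [Norm E] {u : ℝ → E} {n : ℕ}
    (hu : u =O[𝓝 0] fun h ↦ h ^ n) (c : ℝ) :
    (fun h ↦ u (c * h)) =O[𝓝 0] fun h ↦ h ^ n := by
  have hscale : Tendsto (fun h ↦ c * h) (𝓝 0) (𝓝 0) := by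
    simpa using (continuous_const_mul c).tendsto 0
  refine (hu.comp_tendsto hscale).trans ?_
  simpa [Function.comp_def, mul_pow] using isBigO_const_mul_self (c ^ n) (fun h : ℝ ↦ h ^ n) (𝓝 0)

theorem ContDiffAt.isBigO_centered_second_difference {f : ℝ → ℝ} {x : ℝ}
    (hf : ContDiffAt ℝ 3 f x) :
    (fun h ↦ f (x + h) - 2 * f x + f (x - h) - h ^ 2 * deriv (deriv f) x)
      =O[𝓝 0] fun h ↦ h ^ 3 := by
  have hR := hf.isBigO_sub_taylor_two
  refine (hR.add (hR.comp_const_mul_of_pow (-1))).congr_left fun h ↦ ?_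
  ring_nf

theorem ContDiffAt.isBigO_forward_second_difference {f : ℝ → ℝ} {x : ℝ}
    (hf : ContDiffAt ℝ 3 f x) :
    (fun h ↦ f (x + 2 * h) - 2 * f (x + h) + f x - h ^ 2 * deriv (deriv f) x)
      =O[𝓝 0] fun h ↦ h ^ 3 := by
  have hR := hf.isBigO_sub_taylor_two
  refine ((hR.comp_const_mul_of_pow 2).sub (hR.const_mul_left 2)).congr_left fun h ↦ ?_
  ring_nf

theorem isBigO_sq_div_sub_of_isBigO {D : ℝ → ℝ} {b : ℝ}
    (hD : (fun h ↦ D h - h ^ 2 * b) =O[𝓝 0] fun h ↦ h ^ 3) :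
    (fun h ↦ (D h / h) ^ 2 - h ^ 2 * b ^ 2) =O[𝓝 0] fun h ↦ h ^ 3 := by
  have herr : (fun h ↦ D h / h - h * b) =O[𝓝 0] fun h ↦ h ^ 2 := by
    refine (hD.mul (isBigO_refl (fun h : ℝ ↦ h⁻¹) _)).congr (fun h ↦ ?_) (fun h ↦ ?_) <;>
      rcases eq_or_ne h 0 with rfl | hh <;> field_simp
  have hsum : (fun h ↦ D h / h + h * b) =O[𝓝 0] fun h ↦ h := by
    have h2 : (fun h : ℝ ↦ h ^ 2) =O[𝓝 0] fun h ↦ h := by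
      simpa using (isLittleO_pow_pow (𝕜 := ℝ) (m := 1) (n := 2) (by norm_num)).isBigO
    refine ((herr.trans h2).add (isBigO_const_mul_self (2 * b) (fun h : ℝ ↦ h) _)).congr_left
      fun h ↦ ?_
    ring
  refine (herr.mul hsum).congr (fun h ↦ ?_) (fun h ↦ ?_) <;> ring

theorem Asymptotics.IsBigO.exists_pos_bound_pow {E : Type*} [Norm E] {u : ℝ → E} {n : ℕ}
    (hu : u =O[𝓝 0] fun h ↦ h ^ n) :
    ∃ C > 0, ∃ ε > 0, ∀ h : ℝ, 0 < h → h < ε → ‖u h‖ ≤ C * h ^ n := by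
  obtain ⟨C, hC, hCu⟩ := hu.exists_pos
  obtain ⟨ε, hε, hball⟩ := Metric.eventually_nhds_iff.1 hCu.bound
  refine ⟨C, hC, ε, hε, fun h h0 hhε ↦ ?_⟩
  have hdist : dist h 0 < ε := by rwa [Real.dist_0_eq_abs, abs_of_pos h0]
  simpa [abs_of_pos h0] using hball hdist

/-- For a `C⁴` function `f` near `x`, the `r = 2` WENO smoothness indicators
`β₀⁺ = ((f(x+Δx) − 2f(x) + f(x−Δx))/Δx)²` and
`β₁⁺ = ((f(x+2Δx) − 2f(x+Δx) + f(x))/Δx)²` satisfy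
`β_k⁺ = Δx² f''(x)² + O(Δx³)`, hence `β₀⁺ − β₁⁺ = O(Δx³)`. -/
theorem smoothness_indicators_of_smooth_function
    (f : ℝ → ℝ) (Ω : Set ℝ) (x : ℝ) (hΩ : IsOpen Ω) (hx : x ∈ Ω)
    (hf : ContDiffOn ℝ 4 f Ω) :
    ∃ C > (0:ℝ), ∃ ε > (0:ℝ), ∀ Δx : ℝ, 0 < Δx → Δx < ε →
      |((f (x + Δx) - 2 * f x + f (x - Δx)) / Δx) ^ 2
        - Δx ^ 2 * (deriv (deriv f) x) ^ 2| ≤ C * Δx ^ 3 ∧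
      |((f (x + 2 * Δx) - 2 * f (x + Δx) + f x) / Δx) ^ 2
        - Δx ^ 2 * (deriv (deriv f) x) ^ 2| ≤ C * Δx ^ 3 ∧
      |((f (x + Δx) - 2 * f x + f (x - Δx)) / Δx) ^ 2
        - ((f (x + 2 * Δx) - 2 * f (x + Δx) + f x) / Δx) ^ 2| ≤ C * Δx ^ 3 := by
  have hf3 : ContDiffAt ℝ 3 f x := (hf.contDiffAt (hΩ.mem_nhds hx)).of_le (by norm_num)
  have hβ₀ := isBigO_sq_div_sub_of_isBigO hf3.isBigO_centered_second_difference
  have hβ₁ := isBigO_sq_div_sub_of_isBigO hf3.isBigO_forward_second_difference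
  obtain ⟨C, hC, ε, hε, hbound⟩ :=
    ((hβ₀.prod_left hβ₁).prod_left (hβ₀.sub hβ₁)).exists_pos_bound_pow
  refine ⟨C, hC, ε, hε, fun Δx hpos hlt ↦ ?_⟩
  have h := hbound Δx hpos hlt
  simp only [Prod.norm_def, Real.norm_eq_abs, max_le_iff, sub_sub_sub_cancel_right] at h
  exact ⟨h.1.1, h.1.2, h.2⟩
end
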